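/- Let H̃ = p₁² + p₂² + (a·q₁ + b)·q₂^(-2/3) on q₂ > 0 and Z̃₄ = p₁²(p₁² + 2p₂²) + 2a·p₁(p₁q₁ + 3p₂q₂)·q₂^(-2/3) + 2b·p₁²·q₂^(-2/3) + (9a²/2)·q₂^(2/3). Then {H̃, Z̃₄} = 0. -/
import Mathlib

noncomputable def pb (F G : ℝ → ℝ → ℝ → ℝ → ℝ) (q1 q2 p1 p2 : ℝ) : ℝ :=
  deriv (fun x => F x q2 p1 p2) q1 * deriv (fun x => G q1 q2 x p2) p1
  + deriv (fun x => F q1 x p1 p2) q2 * deriv (fun x => G q1 q2 p1 x) p2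
  - deriv (fun x => F q1 q2 x p2) p1 * deriv (fun x => G x q2 p1 p2) q1
  - deriv (fun x => F q1 q2 p1 x) p2 * deriv (fun x => G q1 x p1 p2) q2

noncomputable def Ht (a b : ℝ) (q1 q2 p1 p2 : ℝ) : ℝ :=
  p1 ^ 2 + p2 ^ 2 + (a * q1 + b) * q2 ^ (-(2 : ℝ) / 3)

noncomputable def Z4 (a b : ℝ) (q1 q2 p1 p2 : ℝ) : ℝ :=
  p1 ^ 2 * (p1 ^ 2 + 2 * p2 ^ 2)
  + 2 * a * p1 * (p1 * q1 + 3 * p2 * q2) * q2 ^ (-(2 : ℝ) / 3)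
  + 2 * b * p1 ^ 2 * q2 ^ (-(2 : ℝ) / 3)
  + (9 * a ^ 2 / 2) * q2 ^ ((2 : ℝ) / 3)

lemma hrp (c : ℝ) {x : ℝ} (hx : 0 < x) :
    HasDerivAt (fun y : ℝ => y ^ c) (c * x ^ (c - 1)) x :=
  Real.hasDerivAt_rpow_const (Or.inl hx.ne')

theorem stmt3 (a b : ℝ) (q1 q2 p1 p2 : ℝ) (hq2 : 0 < q2) :
    pb (Ht a b) (Z4 a b) q1 q2 p1 p2 = 0 := by
  have hA : deriv (fun x => Ht a b x q2 p1 p2) q1 = a * q2 ^ (-(2:ℝ)/3) := by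
    have h : HasDerivAt (fun x => Ht a b x q2 p1 p2) (a * q2 ^ (-(2:ℝ)/3)) q1 := by
      unfold Ht
      have h : HasDerivAt (fun x : ℝ => (a * x + b) * q2 ^ (-(2:ℝ)/3))
          (a * q2 ^ (-(2:ℝ)/3)) q1 := by
        simpa using (((hasDerivAt_id q1).const_mul a).add_const b).mul_const (q2 ^ (-(2:ℝ)/3))
      simpa using (h.const_add (p1 ^ 2 + p2 ^ 2))
    exact h.deriv
  have hB : deriv (fun x => Ht a b q1 x p1 p2) q2
      = (a * q1 + b) * ((-(2:ℝ)/3) * q2 ^ (-(2:ℝ)/3 - 1)) := by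
    have h : HasDerivAt (fun x => Ht a b q1 x p1 p2)
        ((a * q1 + b) * ((-(2:ℝ)/3) * q2 ^ (-(2:ℝ)/3 - 1))) q2 := by
      unfold Ht
      simpa using (((hrp (-(2:ℝ)/3) hq2).const_mul (a * q1 + b)).const_add (p1 ^ 2 + p2 ^ 2))
    exact h.deriv
  have hC : deriv (fun x => Ht a b q1 q2 x p2) p1 = 2 * p1 := by
    have h : HasDerivAt (fun x => Ht a b q1 q2 x p2) (2 * p1) p1 := by
      unfold Ht
      have h := ((hasDerivAt_pow 2 p1).add_const (p2 ^ 2)).add_const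
        ((a * q1 + b) * q2 ^ (-(2:ℝ)/3))
      exact h.congr_deriv (by push_cast; ring)
    exact h.deriv
  have hD : deriv (fun x => Ht a b q1 q2 p1 x) p2 = 2 * p2 := by
    have h : HasDerivAt (fun x => Ht a b q1 q2 p1 x) (2 * p2) p2 := by
      unfold Ht
      have h := (((hasDerivAt_pow 2 p2).const_add (p1 ^ 2)).add_const
        ((a * q1 + b) * q2 ^ (-(2:ℝ)/3)))
      exact h.congr_deriv (by push_cast; ring)
    exact h.deriv
  have hE : deriv (fun x => Z4 a b x q2 p1 p2) q1
      = 2 * a * p1 * p1 * q2 ^ (-(2:ℝ)/3) := by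
    have h : HasDerivAt (fun x => Z4 a b x q2 p1 p2)
        (2 * a * p1 * p1 * q2 ^ (-(2:ℝ)/3)) q1 := by
      unfold Z4
      have h : HasDerivAt (fun x : ℝ => 2 * a * p1 * (p1 * x + 3 * p2 * q2) * q2 ^ (-(2:ℝ)/3))
          (2 * a * p1 * p1 * q2 ^ (-(2:ℝ)/3)) q1 := by
        have h := ((((hasDerivAt_id q1).const_mul p1).add_const (3 * p2 * q2)).const_mul
          (2 * a * p1)).mul_const (q2 ^ (-(2:ℝ)/3))
        exact h.congr_deriv (by ring)
      exact ((h.const_add (p1 ^ 2 * (p1 ^ 2 + 2 * p2 ^ 2))).add_const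
        (2 * b * p1 ^ 2 * q2 ^ (-(2:ℝ)/3))).add_const ((9 * a ^ 2 / 2) * q2 ^ ((2:ℝ)/3))
    exact h.deriv
  have hG : deriv (fun x => Z4 a b q1 q2 x p2) p1
      = 4 * p1 ^ 3 + 4 * p1 * p2 ^ 2
        + 2 * a * (2 * p1 * q1 + 3 * p2 * q2) * q2 ^ (-(2:ℝ)/3)
        + 4 * b * p1 * q2 ^ (-(2:ℝ)/3) := by
    have h : HasDerivAt (fun x => Z4 a b q1 q2 x p2)
        (4 * p1 ^ 3 + 4 * p1 * p2 ^ 2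
          + 2 * a * (2 * p1 * q1 + 3 * p2 * q2) * q2 ^ (-(2:ℝ)/3)
          + 4 * b * p1 * q2 ^ (-(2:ℝ)/3)) p1 := by
      unfold Z4
      have i1 : HasDerivAt (fun x : ℝ => x ^ 2 + 2 * p2 ^ 2) ((2:ℕ) * p1 ^ 1) p1 :=
        (hasDerivAt_pow 2 p1).add_const (2 * p2 ^ 2)
      have T1 := (hasDerivAt_pow 2 p1).mul i1
      have ha := (hasDerivAt_id p1).const_mul (2 * a)
      have hb := (((hasDerivAt_id p1).mul_const q1).add_const (3 * p2 * q2))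
      have T2 := (ha.mul hb).mul_const (q2 ^ (-(2:ℝ)/3))
      have T3 := ((hasDerivAt_pow 2 p1).const_mul (2 * b)).mul_const (q2 ^ (-(2:ℝ)/3))
      have h := ((T1.add T2).add T3).add_const ((9 * a ^ 2 / 2) * q2 ^ ((2:ℝ)/3))
      exact h.congr_deriv (by simp only [id_eq]; push_cast; ring)
    exact h.deriv
  have hH : deriv (fun x => Z4 a b q1 q2 p1 x) p2
      = 4 * p1 ^ 2 * p2 + 6 * a * p1 * q2 * q2 ^ (-(2:ℝ)/3) := by
    have h : HasDerivAt (fun x => Z4 a b q1 q2 p1 x)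
        (4 * p1 ^ 2 * p2 + 6 * a * p1 * q2 * q2 ^ (-(2:ℝ)/3)) p2 := by
      unfold Z4
      have T1 := (((hasDerivAt_pow 2 p2).const_mul 2).const_add (p1 ^ 2)).const_mul (p1 ^ 2)
      have T2 := (((((hasDerivAt_id p2).const_mul 3).mul_const q2).const_add
        (p1 * q1)).const_mul (2 * a * p1)).mul_const (q2 ^ (-(2:ℝ)/3))
      have h := ((T1.add T2).add_const (2 * b * p1 ^ 2 * q2 ^ (-(2:ℝ)/3))).add_const
        ((9 * a ^ 2 / 2) * q2 ^ ((2:ℝ)/3))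
      exact h.congr_deriv (by push_cast; ring)
    exact h.deriv
  have hF : deriv (fun x => Z4 a b q1 x p1 p2) q2
      = 2 * a * p1 * (3 * p2 * q2 ^ (-(2:ℝ)/3)
          + (p1 * q1 + 3 * p2 * q2) * ((-(2:ℝ)/3) * q2 ^ (-(2:ℝ)/3 - 1)))
        + 2 * b * p1 ^ 2 * ((-(2:ℝ)/3) * q2 ^ (-(2:ℝ)/3 - 1))
        + (9 * a ^ 2 / 2) * (((2:ℝ)/3) * q2 ^ ((2:ℝ)/3 - 1)) := by
    have h : HasDerivAt (fun x => Z4 a b q1 x p1 p2)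
        (2 * a * p1 * (3 * p2 * q2 ^ (-(2:ℝ)/3)
          + (p1 * q1 + 3 * p2 * q2) * ((-(2:ℝ)/3) * q2 ^ (-(2:ℝ)/3 - 1)))
        + 2 * b * p1 ^ 2 * ((-(2:ℝ)/3) * q2 ^ (-(2:ℝ)/3 - 1))
        + (9 * a ^ 2 / 2) * (((2:ℝ)/3) * q2 ^ ((2:ℝ)/3 - 1))) q2 := by
      unfold Z4
      have h1 : HasDerivAt (fun x : ℝ => p1 * q1 + 3 * p2 * x) (3 * p2) q2 := by
        simpa using (((hasDerivAt_id q2).const_mul (3 * p2)).const_add (p1 * q1))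
      have T2 := (h1.const_mul (2 * a * p1)).mul (hrp (-(2:ℝ)/3) hq2)
      have T3 := (hrp (-(2:ℝ)/3) hq2).const_mul (2 * b * p1 ^ 2)
      have T4 := (hrp ((2:ℝ)/3) hq2).const_mul (9 * a ^ 2 / 2)
      refine HasDerivAt.congr_deriv
        (((T2.const_add (p1 ^ 2 * (p1 ^ 2 + 2 * p2 ^ 2))).add T3).add T4) ?_
      ring
    exact h.deriv
  have hsub1 : q2 ^ (-(2:ℝ)/3 - 1) = q2 ^ (-(2:ℝ)/3) / q2 := by
    rw [Real.rpow_sub hq2, Real.rpow_one]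
  have hsub2 : q2 ^ ((2:ℝ)/3 - 1) = q2 ^ ((2:ℝ)/3) / q2 := by
    rw [Real.rpow_sub hq2, Real.rpow_one]
  have hv : q2 ^ ((2:ℝ)/3) = q2 ^ (-(2:ℝ)/3) * q2 ^ (-(2:ℝ)/3) * (q2 * q2) := by
    have h2 : q2 * q2 = q2 ^ ((2:ℕ):ℝ) := by rw [Real.rpow_natCast]; ring
    rw [h2, ← Real.rpow_add hq2, ← Real.rpow_add hq2]
    norm_num
  rw [pb, hA, hB, hC, hD, hE, hF, hG, hH, hsub1, hsub2, hv]
  field_simp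
  ring
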